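/- arXiv:2008.06167 — 5 statements merged into one kernel-verified Lean document; each statement's English description precedes it below -/
import Mathlib

section
/- An equalizer X* of a symmetric bimatrix game C is an evolutionarily stable strategy if and only if it is a globally evolutionarily stable strategy. -/
open Matrix

/-- An equalizer is an ESS iff it is a GESS. -/
theorem equalizer_ESS_iff_GESS {n : ℕ} (C : Matrix (Fin n) (Fin n) ℝ)
    (Xs : Fin n → ℝ) (hXs : Xs ∈ stdSimplex ℝ (Fin n))
    (heq : ∀ X ∈ stdSimplex ℝ (Fin n), X ⬝ᵥ C.mulVec Xs = Xs ⬝ᵥ C.mulVec Xs) :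
    (∃ ε > 0, ∀ X ∈ stdSimplex ℝ (Fin n), X ≠ Xs → dist X Xs < ε →
        X ⬝ᵥ C.mulVec X < Xs ⬝ᵥ C.mulVec X) ↔
      (∀ X ∈ stdSimplex ℝ (Fin n), X ≠ Xs → X ⬝ᵥ C.mulVec X < Xs ⬝ᵥ C.mulVec X) := by
  constructor
  · rintro ⟨ε, hε, hloc⟩ X hX hne
    set D := dist X Xs with hD
    have hD0 : 0 ≤ D := dist_nonneg
    set t : ℝ := min 1 (ε / (D + 1)) with ht_def
    have ht0 : 0 < t := lt_min one_pos (div_pos hε (by linarith))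
    have ht1 : t ≤ 1 := min_le_left _ _
    set Y : Fin n → ℝ := Xs + t • (X - Xs) with hY
    have hYmem : Y ∈ stdSimplex ℝ (Fin n) := by
      have hconv := (convex_stdSimplex ℝ (Fin n)) hXs hX
        (by linarith : (0:ℝ) ≤ 1 - t) ht0.le (by ring)
      convert hconv using 1
      funext i
      simp [hY, smul_sub]
      ring
    have hYs : Y - Xs = t • (X - Xs) := by
      funext i; simp [hY]
    have hYne : Y ≠ Xs := by
      intro h
      apply hne
      have : t • (X - Xs) = 0 := by rw [← hYs, h, sub_self]
      rcases smul_eq_zero.mp this with h' | h'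
      · exact absurd h' ht0.ne'
      · funext i
        have := congrFun h' i
        simpa [sub_eq_zero] using this
    have hdist : dist Y Xs = t * D := by
      rw [dist_eq_norm, hYs, norm_smul, Real.norm_of_nonneg ht0.le, hD, dist_eq_norm]
    have hdlt : dist Y Xs < ε := by
      rw [hdist]
      have h1 : t ≤ ε / (D + 1) := min_le_right _ _
      have h2 : t * D ≤ (ε / (D + 1)) * D := by
        apply mul_le_mul_of_nonneg_right h1 hD0
      have h3 : (ε / (D + 1)) * D < ε := by
        rw [div_mul_eq_mul_div, div_lt_iff₀ (by linarith)]
        nlinarith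
      linarith
    have hYlt := hloc Y hYmem hYne hdlt
    have h0 := heq X hX
    have key : Xs ⬝ᵥ C.mulVec Y - Y ⬝ᵥ C.mulVec Y
        = t^2 * (Xs ⬝ᵥ C.mulVec X - X ⬝ᵥ C.mulVec X) := by
      simp only [hY, mulVec_add, mulVec_smul, mulVec_sub, dotProduct_add,
        add_dotProduct, dotProduct_smul, smul_dotProduct, dotProduct_sub,
        sub_dotProduct, smul_eq_mul]
      linear_combination (t^2 - t) * h0
    have ht2 : 0 < t^2 := by positivity
    nlinarith [hYlt, key]
  · intro hglob
    exact ⟨1, one_pos, fun X hX hne _ => hglob X hX hne⟩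
end

section
/- An equalizer X* of a symmetric bimatrix game C is a neutrally stable strategy if and only if it is a globally neutrally stable strategy. -/
open Matrix

/-- An equalizer is an NSS iff it is a GNSS. -/
theorem equalizer_NSS_iff_GNSS {n : ℕ} (C : Matrix (Fin n) (Fin n) ℝ)
    (Xs : Fin n → ℝ) (hXs : Xs ∈ stdSimplex ℝ (Fin n))
    (heq : ∀ X ∈ stdSimplex ℝ (Fin n), X ⬝ᵥ C.mulVec Xs = Xs ⬝ᵥ C.mulVec Xs) :
    (∃ ε > 0, ∀ X ∈ stdSimplex ℝ (Fin n), dist X Xs < ε →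
        X ⬝ᵥ C.mulVec X ≤ Xs ⬝ᵥ C.mulVec X) ↔
      (∀ X ∈ stdSimplex ℝ (Fin n), X ⬝ᵥ C.mulVec X ≤ Xs ⬝ᵥ C.mulVec X) := by
  constructor
  · rintro ⟨ε, hε, h⟩ X hX
    set d := dist X Xs with hd
    have hd0 : (0:ℝ) ≤ d := dist_nonneg
    set t : ℝ := min 1 (ε / (d + 1)) with ht
    have ht0 : 0 < t := lt_min one_pos (by positivity)
    have ht1 : t ≤ 1 := min_le_left _ _
    set Y : Fin n → ℝ := (1 - t) • Xs + t • X with hY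
    have hYmem : Y ∈ stdSimplex ℝ (Fin n) :=
      (convex_stdSimplex ℝ (Fin n)) hXs hX (by linarith) ht0.le (by ring)
    have hdist : dist Y Xs < ε := by
      have : Y - Xs = t • (X - Xs) := by
        simp only [hY]; ext i; simp [smul_eq_mul]; ring
      have h1 : dist Y Xs = t * d := by
        rw [dist_eq_norm, this, norm_smul, Real.norm_eq_abs, abs_of_pos ht0,
          ← dist_eq_norm]
      rw [h1]
      have h2 : t ≤ ε / (d + 1) := min_le_right _ _
      calc t * d ≤ (ε / (d + 1)) * d := by nlinarith
        _ < ε := by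
          rw [div_mul_eq_mul_div, div_lt_iff₀ (by linarith)]
          nlinarith
    have key := h Y hYmem hdist
    have hXsX := heq X hX
    simp only [hY, mulVec_add, mulVec_smul, dotProduct_add, add_dotProduct,
      dotProduct_smul, smul_dotProduct, smul_eq_mul] at key
    nlinarith [sq_nonneg t, mul_pos ht0 ht0]
  · intro h
    exact ⟨1, one_pos, fun X hX _ => h X hX⟩
end

section
/- A mixed strategy X in the interior condition setting is a fixed point of the Hedge map T (with learning rate α > 0) if and only if X is a pure strategy, or (CX)ᵢ = (CX)ⱼ for all i, j in the support of X. -/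
open Matrix

/-- Fixed points of the Hedge map: pure strategies or strategies whose support
is payoff-constant. -/
theorem hedge_fixed_point_iff {n : ℕ} (C : Matrix (Fin n) (Fin n) ℝ) (α : ℝ) (hα : 0 < α)
    (X : Fin n → ℝ) (hX : X ∈ stdSimplex ℝ (Fin n)) :
    (∀ i, X i * Real.exp (α * C.mulVec X i) /
        (∑ j, X j * Real.exp (α * C.mulVec X j)) = X i) ↔
      ((∃ i, X = Pi.single i 1) ∨
        ∀ i ∈ {i | X i > 0}, ∀ j ∈ {i | X i > 0}, C.mulVec X i = C.mulVec X j) := by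
  have hnonneg : ∀ i, 0 ≤ X i := hX.1
  have hsum : ∑ j, X j = 1 := hX.2
  have hDpos : 0 < ∑ j, X j * Real.exp (α * C.mulVec X j) := by
    obtain ⟨j, hj⟩ : ∃ j, 0 < X j := by
      by_contra hcon
      push_neg at hcon
      have : ∑ j, X j = 0 :=
        Finset.sum_eq_zero fun j _ => le_antisymm (hcon j) (hnonneg j)
      rw [this] at hsum; norm_num at hsum
    exact Finset.sum_pos'
      (fun k _ => mul_nonneg (hnonneg k) (Real.exp_pos _).le)
      ⟨j, Finset.mem_univ j, mul_pos hj (Real.exp_pos _)⟩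
  constructor
  · intro h
    right
    intro i hi j hj
    have hi' : 0 < X i := hi
    have hj' : 0 < X j := hj
    have key : ∀ k, 0 < X k →
        Real.exp (α * C.mulVec X k) = ∑ j, X j * Real.exp (α * C.mulVec X j) := by
      intro k hk
      have hk1 := h k
      rw [div_eq_iff hDpos.ne'] at hk1
      exact mul_left_cancel₀ hk.ne' hk1
    have : α * C.mulVec X i = α * C.mulVec X j :=
      Real.exp_injective ((key i hi').trans (key j hj').symm)
    exact mul_left_cancel₀ hα.ne' this
  · intro h
    have hconst : ∀ i, 0 < X i → ∀ j, 0 < X j → C.mulVec X i = C.mulVec X j := by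
      rcases h with ⟨k, hk⟩ | h
      · intro i hi j hj
        have hik : i = k := by
          by_contra hne
          rw [hk, Pi.single_apply, if_neg hne] at hi
          exact lt_irrefl 0 hi
        have hjk : j = k := by
          by_contra hne
          rw [hk, Pi.single_apply, if_neg hne] at hj
          exact lt_irrefl 0 hj
        rw [hik, hjk]
      · exact fun i hi j hj => h i hi j hj
    intro i
    by_cases hXi : X i = 0
    · simp [hXi]
    · have hi : 0 < X i := lt_of_le_of_ne (hnonneg i) (Ne.symm hXi)
      have hDeq : (∑ j, X j * Real.exp (α * C.mulVec X j))
          = Real.exp (α * C.mulVec X i) := by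
        have hcong : ∀ j ∈ Finset.univ,
            X j * Real.exp (α * C.mulVec X j) = X j * Real.exp (α * C.mulVec X i) := by
          intro j _
          by_cases hXj : X j = 0
          · simp [hXj]
          · rw [hconst j (lt_of_le_of_ne (hnonneg j) (Ne.symm hXj)) i hi]
        rw [Finset.sum_congr rfl hcong, ← Finset.sum_mul, hsum, one_mul]
      rw [hDeq, mul_div_assoc, div_self (Real.exp_ne_zero _), mul_one]
end

section
/- Under the Hedge iteration with strategies Y⁰,…,Yᴷ and learning rates αₖ > 0 starting from interior X⁰, for any strategy Y in the simplex and any p in the support of Y: (CȲᴷ)ₚ - Ȳᴷ · CȲᴷ = (1/A_K)[ln(X^{K+1}(p)/X⁰(p)) - Σⱼ Ȳᴷ(j)·ln(X^{K+1}(j)/X⁰(j))]. -/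
open Matrix Finset

/-!
Taking logarithms, the Hedge update telescopes:
`log (X^{K+1} i / X⁰ i) = A_K (C Ȳᴷ)ᵢ - S`, where `S = Σₖ log Zₖ` is the sum of the log-normalizers
and does not depend on `i`. Averaging this against `Ȳᴷ`, whose entries sum to `1`, cancels `S`.
-/

section Hedge

variable {ι : Type*} [Fintype ι] {X u : ℕ → ι → ℝ}

theorem hedge_iterate_pos
    (hiter : ∀ k i, X (k + 1) i = X k i * Real.exp (u k i) / ∑ j, X k j * Real.exp (u k j))
    (hX0 : ∀ i, 0 < X 0 i) (k : ℕ) (i : ι) : 0 < X k i := by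
  induction k generalizing i with
  | zero => exact hX0 i
  | succ k ih =>
    rw [hiter]
    have hterm : ∀ j, 0 < X k j * Real.exp (u k j) := fun j => mul_pos (ih j) (Real.exp_pos _)
    exact div_pos (hterm i) (sum_pos (fun j _ => hterm j) ⟨i, mem_univ i⟩)

theorem log_hedge_iterate_div_initial
    (hiter : ∀ k i, X (k + 1) i = X k i * Real.exp (u k i) / ∑ j, X k j * Real.exp (u k j))
    (hX0 : ∀ i, 0 < X 0 i) (M : ℕ) (i : ι) :
    Real.log (X M i / X 0 i) =
      ∑ k ∈ range M, u k i - ∑ k ∈ range M, Real.log (∑ j, X k j * Real.exp (u k j)) := by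
  induction M with
  | zero => simp [(hX0 i).ne']
  | succ M ih =>
    have hpos := hedge_iterate_pos hiter hX0
    have hZ : 0 < ∑ j, X M j * Real.exp (u M j) :=
      sum_pos (fun j _ => mul_pos (hpos M j) (Real.exp_pos _)) ⟨i, mem_univ i⟩
    have hsplit : X (M + 1) i / X 0 i =
        X M i / X 0 i * Real.exp (u M i) / ∑ j, X M j * Real.exp (u M j) := by
      rw [hiter]; ring
    rw [hsplit, Real.log_div (mul_pos (div_pos (hpos M i) (hX0 i)) (Real.exp_pos _)).ne' hZ.ne',
      Real.log_mul (div_pos (hpos M i) (hX0 i)).ne' (Real.exp_pos _).ne', Real.log_exp, ih,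
      sum_range_succ, sum_range_succ]
    ring

end Hedge

theorem sum_apply_smul_sum_smul_of_sum_eq_one {ι κ : Type*} [Fintype ι] (a : ℝ) (s : Finset κ)
    (α : κ → ℝ) (Y : κ → ι → ℝ) (hY : ∀ k ∈ s, ∑ j, Y k j = 1) :
    ∑ j, (a • ∑ k ∈ s, α k • Y k) j = a * ∑ k ∈ s, α k := by
  simp only [Pi.smul_apply, Finset.sum_apply, smul_eq_mul, ← mul_sum]
  rw [sum_comm]
  congr 1
  exact sum_congr rfl fun k hk => by rw [← mul_sum, hY k hk, mul_one]

theorem hedge_average_error_identity_general {n : ℕ}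
    (C : Matrix (Fin n) (Fin n) ℝ)
    (X : ℕ → Fin n → ℝ) (Y : ℕ → Fin n → ℝ) (α : ℕ → ℝ)
    (hX0 : ∀ i, 0 < X 0 i)
    (hYk : ∀ k, Y k ∈ stdSimplex ℝ (Fin n))
    (hiter : ∀ k i, X (k + 1) i =
      X k i * Real.exp (α k * C.mulVec (Y k) i) /
        (∑ j, X k j * Real.exp (α k * C.mulVec (Y k) j)))
    (K : ℕ)
    (Ybar : Fin n → ℝ)
    (hYbar : Ybar = (∑ k ∈ range (K + 1), α k)⁻¹ • ∑ k ∈ range (K + 1), α k • Y k)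
    (p : Fin n) :
    C.mulVec Ybar p - Ybar ⬝ᵥ C.mulVec Ybar =
      (∑ k ∈ range (K + 1), α k)⁻¹ * Real.log (X (K + 1) p / X 0 p) -
        (∑ k ∈ range (K + 1), α k)⁻¹ *
          ∑ j, Ybar j * Real.log (X (K + 1) j / X 0 j) := by
  set A := ∑ k ∈ range (K + 1), α k
  set T := ∑ k ∈ range (K + 1), α k • C *ᵥ Y k
  set S := ∑ k ∈ range (K + 1), Real.log (∑ j, X k j * Real.exp (α k * (C *ᵥ Y k) j))
  have hlog : ∀ i, Real.log (X (K + 1) i / X 0 i) = T i - S := fun i => by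
    rw [log_hedge_iterate_div_initial (u := fun k i => α k * (C *ᵥ Y k) i) hiter hX0]
    simp [T, S]
  have hCYbar : C *ᵥ Ybar = A⁻¹ • T := by
    simp only [hYbar, mulVec_smul, mulVec_sum, T]
  have hsum : ∑ j, Ybar j = A⁻¹ * A :=
    hYbar ▸ sum_apply_smul_sum_smul_of_sum_eq_one _ _ _ _ fun k _ => (hYk k).2
  -- `Ȳᴷ` has mass `A⁻¹ * A`, which is `1` unless `A = 0`, when both sides vanish.
  have hinv : A⁻¹ * A * A⁻¹ = A⁻¹ := by simpa using mul_inv_mul_cancel A⁻¹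
  rw [hCYbar, dotProduct_smul, smul_eq_mul, Pi.smul_apply, smul_eq_mul, dotProduct]
  simp only [hlog, mul_sub, sum_sub_distrib, ← sum_mul, hsum]
  linear_combination (-S) * hinv

/-- Approximation-error identity for the weighted empirical average of the Hedge iteration. -/
theorem hedge_average_error_identity {n : ℕ}
    (C : Matrix (Fin n) (Fin n) ℝ)
    (X : ℕ → Fin n → ℝ) (Y : ℕ → Fin n → ℝ) (α : ℕ → ℝ)
    (hα : ∀ k, 0 < α k)
    (hX0 : ∀ i, 0 < X 0 i) (hX0s : X 0 ∈ stdSimplex ℝ (Fin n))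
    (hYk : ∀ k, Y k ∈ stdSimplex ℝ (Fin n))
    (hiter : ∀ k i, X (k + 1) i =
      X k i * Real.exp (α k * C.mulVec (Y k) i) /
        (∑ j, X k j * Real.exp (α k * C.mulVec (Y k) j)))
    (K : ℕ)
    (Ybar : Fin n → ℝ)
    (hYbar : Ybar = (∑ k ∈ range (K + 1), α k)⁻¹ • ∑ k ∈ range (K + 1), α k • Y k)
    (Yv : Fin n → ℝ) (hYv : Yv ∈ stdSimplex ℝ (Fin n))
    (p : Fin n) (hp : 0 < Yv p) :
    C.mulVec Ybar p - Ybar ⬝ᵥ C.mulVec Ybar =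
      (∑ k ∈ range (K + 1), α k)⁻¹ * Real.log (X (K + 1) p / X 0 p) -
        (∑ k ∈ range (K + 1), α k)⁻¹ *
          ∑ j, Ybar j * Real.log (X (K + 1) j / X 0 j) :=
  hedge_average_error_identity_general C X Y α hX0 hYk hiter K Ybar hYbar p
end

section
/- In the Nisan game with Nisan parameter k equal to the clique number ω(G), if X* is a maximum-clique equilibrium (the uniform strategy over a maximum clique, padded with 0 at index 0), then max_{0 ≤ i ≤ n} (C⁺X*)ᵢ = X*·C⁺X* = 1 - 1/(2k); in particular X* is a symmetric Nash equilibrium strategy of (C⁺, (C⁺)ᵀ). -/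
/-!
The uniform strategy `X` on a maximum clique `S` of size `k` earns `1 - 1/(2k)` against itself
at every vertex of `S` (a half for itself plus `k - 1` neighbours, averaged over `k`) and at
Nisan's strategy 0. Every other vertex misses at least one member of `S`, since otherwise `S`
would extend to a larger clique, so it earns at most `(k - 1)/k`. Hence `X` is a best response
to itself, which is the symmetric Nash condition.
-/

open Matrix Finset

/-- The Nisan–Bomze payoff matrix of a graph `G` with Nisan parameter `k`.
Index `none` is Nisan's strategy 0; index `some a` is vertex `a`. -/
noncomputable def nisanMatrix {n : ℕ} (G : SimpleGraph (Fin n)) [DecidableRel G.Adj] (k : ℕ) :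
    Matrix (Option (Fin n)) (Option (Fin n)) ℝ :=
  fun i j =>
    match i, j with
    | none, _ => 1 - 1 / (2 * k)
    | _, none => 1 - 1 / (2 * k)
    | some a, some b => if a = b then 1 / 2 else if G.Adj a b then 1 else 0

section Simplex

variable {ι R : Type*} [Fintype ι]

theorem dotProduct_eq_of_sum_eq_one [NonAssocSemiring R] {x v : ι → R} {c : R}
    (hx : ∑ i, x i = 1) (hv : ∀ i, x i ≠ 0 → v i = c) : x ⬝ᵥ v = c := by
  calc x ⬝ᵥ v = ∑ i, x i * c := by
        refine Finset.sum_congr rfl fun i _ => ?_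
        by_cases hi : x i = 0
        · simp [hi]
        · rw [hv i hi]
    _ = c := by rw [← Finset.sum_mul, hx, one_mul]

variable [CommRing R] [PartialOrder R] [IsOrderedRing R]

theorem dotProduct_le_of_mem_stdSimplex {X v : ι → R} {c : R} (hX : X ∈ stdSimplex R ι)
    (hv : ∀ i, v i ≤ c) : X ⬝ᵥ v ≤ c :=
  calc X ⬝ᵥ v ≤ ∑ i, X i * c :=
        Finset.sum_le_sum fun i _ => mul_le_mul_of_nonneg_left (hv i) (hX.1 i)
    _ = c := by rw [← Finset.sum_mul, hX.2, one_mul]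

theorem sub_dotProduct_nonneg_of_forall_le {x X v : ι → R} (hX : X ∈ stdSimplex R ι)
    (hv : ∀ i, v i ≤ x ⬝ᵥ v) : 0 ≤ (x - X) ⬝ᵥ v := by
  rw [sub_dotProduct, sub_nonneg]
  exact dotProduct_le_of_mem_stdSimplex hX hv

end Simplex

theorem SimpleGraph.IsNClique.exists_not_adj {α : Type*} [DecidableEq α]
    {G : SimpleGraph α} {k : ℕ} {S : Finset α} (hS : G.IsNClique k S)
    (hmax : ∀ (m : ℕ) (S' : Finset α), G.IsNClique m S' → m ≤ k) (a : α) :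
    ∃ b ∈ S, ¬ G.Adj a b := by
  by_contra! h
  have := hmax _ _ (hS.insert h)
  omega

section CliqueStrategy

variable {n : ℕ} {G : SimpleGraph (Fin n)} [DecidableRel G.Adj] {k : ℕ}

noncomputable def cliqueStrategy (S : Finset (Fin n)) (k : ℕ) : Option (Fin n) → ℝ :=
  fun i => i.elim 0 fun a => if a ∈ S then (1 : ℝ) / k else 0

@[simp]
theorem cliqueStrategy_none (S : Finset (Fin n)) (k : ℕ) : cliqueStrategy S k none = 0 := rfl

@[simp]
theorem cliqueStrategy_some (S : Finset (Fin n)) (k : ℕ) (a : Fin n) :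
    cliqueStrategy S k (some a) = if a ∈ S then (1 : ℝ) / k else 0 := rfl

theorem sum_cliqueStrategy {S : Finset (Fin n)} (hS : #S = k) (hk : k ≠ 0) :
    ∑ i, cliqueStrategy S k i = 1 := by
  simp only [Fintype.sum_option, cliqueStrategy_none, cliqueStrategy_some, zero_add]
  rw [Finset.sum_ite_mem, Finset.univ_inter, Finset.sum_const, hS, nsmul_eq_mul]
  field_simp

theorem exists_mem_of_cliqueStrategy_ne_zero {S : Finset (Fin n)} {i : Option (Fin n)}
    (hi : cliqueStrategy S k i ≠ 0) : ∃ a ∈ S, i = some a := by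
  rcases i with _ | a
  · exact absurd rfl hi
  · by_cases ha : a ∈ S
    · exact ⟨a, ha, rfl⟩
    · simp [cliqueStrategy, ha] at hi

theorem nisanMatrix_none (j : Option (Fin n)) : nisanMatrix G k none j = 1 - 1 / (2 * k) := by
  cases j <;> rfl

theorem mulVec_nisanMatrix_none (x : Option (Fin n) → ℝ) :
    (nisanMatrix G k *ᵥ x) none = (1 - 1 / (2 * k)) * ∑ i, x i := by
  simp only [mulVec, dotProduct, nisanMatrix_none, ← Finset.mul_sum]

theorem mulVec_cliqueStrategy_some (S : Finset (Fin n)) (a : Fin n) :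
    (nisanMatrix G k *ᵥ cliqueStrategy S k) (some a)
      = (∑ b ∈ S, nisanMatrix G k (some a) (some b)) / k := by
  simp only [mulVec, dotProduct, Fintype.sum_option, cliqueStrategy_none, cliqueStrategy_some,
    mul_ite, mul_zero, zero_add]
  rw [Finset.sum_ite_mem, Finset.univ_inter, Finset.sum_div]
  exact Finset.sum_congr rfl fun b _ => by ring

theorem sum_nisanMatrix_of_isClique {S : Finset (Fin n)} (hS : G.IsClique S) {a : Fin n}
    (ha : a ∈ S) : ∑ b ∈ S, nisanMatrix G k (some a) (some b) = #S - 1 / 2 := by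
  have hrest : ∑ b ∈ S.erase a, nisanMatrix G k (some a) (some b) = #(S.erase a) := by
    rw [Finset.cast_card]
    refine Finset.sum_congr rfl fun b hb => ?_
    have hab : a ≠ b := (Finset.ne_of_mem_erase hb).symm
    simp [nisanMatrix, hab, hS ha (Finset.mem_of_mem_erase hb) hab]
  rw [← Finset.add_sum_erase _ _ ha, hrest, Finset.card_erase_of_mem ha,
    Nat.cast_sub (Finset.card_pos.mpr ⟨a, ha⟩)]
  simp only [nisanMatrix, if_true]
  ring

theorem sum_nisanMatrix_le_of_not_adj {S : Finset (Fin n)} {a b : Fin n} (hb : b ∈ S)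
    (hab : a ≠ b) (hadj : ¬ G.Adj a b) :
    ∑ c ∈ S, nisanMatrix G k (some a) (some c) ≤ #S - 1 := by
  have hrest : ∑ c ∈ S.erase b, nisanMatrix G k (some a) (some c) ≤ #(S.erase b) := by
    rw [Finset.cast_card]
    refine Finset.sum_le_sum fun c _ => ?_
    simp only [nisanMatrix]
    split_ifs <;> norm_num
  have hb_entry : nisanMatrix G k (some a) (some b) = 0 := by simp [nisanMatrix, hab, hadj]
  rw [← Finset.add_sum_erase _ _ hb, hb_entry, zero_add]
  rwa [Finset.card_erase_of_mem hb, Nat.cast_sub (Finset.card_pos.mpr ⟨b, hb⟩),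
    Nat.cast_one] at hrest

theorem mulVec_cliqueStrategy_of_mem {S : Finset (Fin n)} (hS : G.IsNClique k S) {a : Fin n}
    (ha : a ∈ S) : (nisanMatrix G k *ᵥ cliqueStrategy S k) (some a) = 1 - 1 / (2 * k) := by
  have hk : (k : ℝ) ≠ 0 := by
    rw [Nat.cast_ne_zero, ← hS.card_eq]
    exact Finset.card_ne_zero_of_mem ha
  rw [mulVec_cliqueStrategy_some, sum_nisanMatrix_of_isClique hS.isClique ha, hS.card_eq]
  field_simp

theorem mulVec_cliqueStrategy_le {S : Finset (Fin n)} (hk : k ≠ 0) (hS : G.IsNClique k S)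
    (hmax : ∀ (m : ℕ) (S' : Finset (Fin n)), G.IsNClique m S' → m ≤ k)
    (i : Option (Fin n)) :
    (nisanMatrix G k *ᵥ cliqueStrategy S k) i ≤ 1 - 1 / (2 * k) := by
  rcases i with _ | a
  · rw [mulVec_nisanMatrix_none, sum_cliqueStrategy hS.card_eq hk, mul_one]
  by_cases ha : a ∈ S
  · exact (mulVec_cliqueStrategy_of_mem hS ha).le
  obtain ⟨b, hb, hadj⟩ := hS.exists_not_adj hmax a
  have hab : a ≠ b := fun h => ha (h ▸ hb)
  calc (nisanMatrix G k *ᵥ cliqueStrategy S k) (some a) ≤ (k - 1) / k := by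
        rw [mulVec_cliqueStrategy_some, ← hS.card_eq]
        gcongr
        exact sum_nisanMatrix_le_of_not_adj hb hab hadj
    _ ≤ 1 - 1 / (2 * k) := by
        rw [div_le_iff₀ (by positivity)]
        field_simp
        linarith

end CliqueStrategy

/-- When the Nisan parameter equals the clique number, a maximum-clique equilibrium
achieves maximum payoff equal to its potential 1 - 1/(2k), and is a symmetric Nash
equilibrium strategy. -/
theorem nisan_max_clique_equilibrium {n : ℕ} (G : SimpleGraph (Fin n)) [DecidableRel G.Adj]
    (k : ℕ) (hk : 1 < k)
    (S : Finset (Fin n)) (hS : G.IsNClique k S)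
    (hmax : ∀ (m : ℕ) (S' : Finset (Fin n)), G.IsNClique m S' → m ≤ k)
    (Xs : Option (Fin n) → ℝ)
    (hXs : Xs = fun i => match i with
      | none => 0
      | some a => if a ∈ S then (1 : ℝ) / k else 0) :
    (∀ i, (nisanMatrix G k).mulVec Xs i ≤ Xs ⬝ᵥ (nisanMatrix G k).mulVec Xs) ∧
    Xs ⬝ᵥ (nisanMatrix G k).mulVec Xs = 1 - 1 / (2 * k) ∧
    ∀ X ∈ stdSimplex ℝ (Option (Fin n)),
      (Xs - X) ⬝ᵥ (nisanMatrix G k).mulVec Xs ≥ 0 := by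
  obtain rfl : Xs = cliqueStrategy S k := hXs.trans (funext fun i => by cases i <;> rfl)
  have hk0 : k ≠ 0 := by omega
  have hvalue :
      cliqueStrategy S k ⬝ᵥ nisanMatrix G k *ᵥ cliqueStrategy S k = 1 - 1 / (2 * k) :=
    dotProduct_eq_of_sum_eq_one (sum_cliqueStrategy hS.card_eq hk0) fun i hi => by
      obtain ⟨a, ha, rfl⟩ := exists_mem_of_cliqueStrategy_ne_zero hi
      exact mulVec_cliqueStrategy_of_mem hS ha
  have hbest : ∀ i, (nisanMatrix G k *ᵥ cliqueStrategy S k) i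
      ≤ cliqueStrategy S k ⬝ᵥ nisanMatrix G k *ᵥ cliqueStrategy S k :=
    hvalue ▸ mulVec_cliqueStrategy_le hk0 hS hmax
  exact ⟨hbest, hvalue, fun X hX => sub_dotProduct_nonneg_of_forall_le hX hbest⟩
end
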